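/- arXiv:math/0703569 — 4 statements merged into one kernel-verified Lean document; each statement's English description precedes it below -/
import Mathlib

section
/- Let α, β > -1, set λ = α + β + 1, and let r ≠ k be nonnegative integers. Suppose P and Q are real polynomials satisfying, for all t ∈ (-1,1), the Jacobi differential equations d/dt[(1-t)^{α+1}(1+t)^{β+1} P'(t)] + r(r+λ)(1-t)^α(1+t)^β P(t) = 0 and d/dt[(1-t)^{α+1}(1+t)^{β+1} Q'(t)] + k(k+λ)(1-t)^α(1+t)^β Q(t) = 0. Let ξ ∈ (-1,1) with P'(ξ) = 0. Then ∫_ξ^1 P(t) Q(t) (1-t)^α (1+t)^β dt = (1-ξ)^{α+1}(1+ξ)^{β+1} P(ξ) Q'(ξ) / ((k-r)(k+r+λ)). -/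
/-!
Green's formula for the Sturm–Liouville operator `y ↦ (p y')'`: if `(p u')' = -μ w u` and
`(p v')' = -ν w v`, then `W = u (p v') - v (p u')` satisfies `W' = (μ - ν) w u v`, so
`(μ - ν) ∫ₐᵇ w u v = W(b) - W(a)`. For the Jacobi equations on `[ξ, 1]` with
`p = (1-t)^{α+1}(1+t)^{β+1}` the boundary term at `1` vanishes because `α + 1 > 0`, and the one
at `ξ` reduces to `p(ξ) P(ξ) Q'(ξ)` because `P'(ξ) = 0`. The coefficient
`r(r+λ) - k(k+λ) = -(k-r)(k+r+λ)` is nonzero since `r ≠ k` and `λ > -1`.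
-/

open MeasureTheory Polynomial Set

section SturmLiouville

variable {p w u v u' v' : ℝ → ℝ} {μ ν : ℝ}

theorem hasDerivAt_sturmLiouville_wronskian {t : ℝ}
    (hu : HasDerivAt u (u' t) t) (hv : HasDerivAt v (v' t) t)
    (hpu : HasDerivAt (fun s => p s * u' s) (-μ * w t * u t) t)
    (hpv : HasDerivAt (fun s => p s * v' s) (-ν * w t * v t) t) :
    HasDerivAt (fun s => u s * (p s * v' s) - v s * (p s * u' s))
      ((μ - ν) * (u t * v t * w t)) t := by
  refine ((hu.mul hpv).sub (hv.mul hpu)).congr_deriv ?_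
  ring

theorem sturmLiouville_green_formula {a b : ℝ} (hab : a ≤ b)
    (hu : ContinuousOn u (Icc a b)) (hv : ContinuousOn v (Icc a b))
    (hpu_cont : ContinuousOn (fun s => p s * u' s) (Icc a b))
    (hpv_cont : ContinuousOn (fun s => p s * v' s) (Icc a b))
    (hu' : ∀ t ∈ Ioo a b, HasDerivAt u (u' t) t) (hv' : ∀ t ∈ Ioo a b, HasDerivAt v (v' t) t)
    (hpu : ∀ t ∈ Ioo a b, HasDerivAt (fun s => p s * u' s) (-μ * w t * u t) t)
    (hpv : ∀ t ∈ Ioo a b, HasDerivAt (fun s => p s * v' s) (-ν * w t * v t) t)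
    (hint : IntervalIntegrable (fun t => u t * v t * w t) volume a b) :
    (μ - ν) * ∫ t in a..b, u t * v t * w t
      = (u b * (p b * v' b) - v b * (p b * u' b)) - (u a * (p a * v' a) - v a * (p a * u' a)) := by
  rw [← intervalIntegral.integral_const_mul]
  exact intervalIntegral.integral_eq_sub_of_hasDerivAt_of_le hab
    ((hu.mul hpv_cont).sub (hv.mul hpu_cont))
    (fun t ht => hasDerivAt_sturmLiouville_wronskian (hu' t ht) (hv' t ht) (hpu t ht) (hpv t ht))
    (hint.const_mul _)

end SturmLiouville

section JacobiWeight

variable {α β a : ℝ}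

theorem continuousOn_jacobi_coefficient (hα : -1 < α) (ha : -1 < a) :
    ContinuousOn (fun s : ℝ => (1 - s) ^ (α + 1) * (1 + s) ^ (β + 1)) (Icc a 1) := by
  have h₁ : ContinuousOn (fun s : ℝ => 1 - s) (Icc a 1) := by fun_prop
  have h₂ : ContinuousOn (fun s : ℝ => 1 + s) (Icc a 1) := by fun_prop
  exact (h₁.rpow_const fun _ _ => Or.inr (by linarith)).mul
    (h₂.rpow_const fun s hs => Or.inl (by linarith [hs.1]))

theorem intervalIntegrable_mul_one_sub_rpow (hα : -1 < α) {f : ℝ → ℝ}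
    (hf : ContinuousOn f (uIcc a 1)) :
    IntervalIntegrable (fun t => f t * (1 - t) ^ α) volume a 1 := by
  have h := (intervalIntegral.intervalIntegrable_rpow' (a := 1 - a) (b := 0) hα).comp_sub_left 1
  simp only [sub_zero, sub_sub_cancel] at h
  exact h.continuousOn_mul hf

theorem intervalIntegrable_jacobi_weight_mul (hα : -1 < α) (ha : -1 < a) (hle : a ≤ 1)
    {f : ℝ → ℝ} (hf : Continuous f) :
    IntervalIntegrable (fun t => f t * ((1 - t) ^ α * (1 + t) ^ β)) volume a 1 := by
  have h₂ : ContinuousOn (fun s : ℝ => 1 + s) (uIcc a 1) := by fun_prop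
  have hcont : ContinuousOn (fun t => f t * (1 + t) ^ β) (uIcc a 1) := by
    refine hf.continuousOn.mul (h₂.rpow_const fun s hs => Or.inl ?_)
    rw [uIcc_of_le hle] at hs
    linarith [hs.1]
  refine (intervalIntegrable_mul_one_sub_rpow hα hcont).congr fun t _ => ?_
  ring

end JacobiWeight

/-- **Green's-formula identity for a pair of Jacobi differential equation solutions.**
If `P`, `Q` solve the Jacobi equations with parameters `r(r+λ)` and `k(k+λ)` (`r ≠ k`),
and `P'(ξ) = 0` for a point `ξ ∈ (-1,1)`, then
`∫_ξ^1 P Q (1-t)^α(1+t)^β dt = (1-ξ)^{α+1}(1+ξ)^{β+1} P(ξ) Q'(ξ) / ((k-r)(k+r+λ))`. -/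
theorem jacobi_pair_green_identity
    (α β : ℝ) (hα : -1 < α) (hβ : -1 < β) (lam : ℝ) (hlam : lam = α + β + 1)
    (r k : ℕ) (hrk : r ≠ k)
    (P Q : Polynomial ℝ)
    (hP : ∀ t ∈ Set.Ioo (-1:ℝ) 1, HasDerivAt
      (fun s : ℝ => (1 - s) ^ (α + 1) * (1 + s) ^ (β + 1) * (derivative P).eval s)
      (-((r:ℝ) * ((r:ℝ) + lam)) * (1 - t) ^ α * (1 + t) ^ β * P.eval t) t)
    (hQ : ∀ t ∈ Set.Ioo (-1:ℝ) 1, HasDerivAt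
      (fun s : ℝ => (1 - s) ^ (α + 1) * (1 + s) ^ (β + 1) * (derivative Q).eval s)
      (-((k:ℝ) * ((k:ℝ) + lam)) * (1 - t) ^ α * (1 + t) ^ β * Q.eval t) t)
    (ξ : ℝ) (hξ : ξ ∈ Set.Ioo (-1:ℝ) 1) (hPξ : (derivative P).eval ξ = 0) :
    ∫ t in ξ..1, P.eval t * Q.eval t * (1 - t) ^ α * (1 + t) ^ β
      = (1 - ξ) ^ (α + 1) * (1 + ξ) ^ (β + 1) * P.eval ξ * (derivative Q).eval ξ /
        (((k:ℝ) - (r:ℝ)) * ((k:ℝ) + (r:ℝ) + lam)) := by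
  obtain ⟨hξ_gt, hξ_lt⟩ := hξ
  have hsub : Ioo ξ 1 ⊆ Ioo (-1) 1 := Ioo_subset_Ioo_left hξ_gt.le
  have hp := continuousOn_jacobi_coefficient (β := β) hα hξ_gt
  have hgreen := sturmLiouville_green_formula (w := fun t => (1 - t) ^ α * (1 + t) ^ β)
    hξ_lt.le P.continuousOn Q.continuousOn
    (hp.mul (derivative P).continuousOn) (hp.mul (derivative Q).continuousOn)
    (fun t _ => P.hasDerivAt t) (fun t _ => Q.hasDerivAt t)
    (fun t ht => by simpa only [mul_assoc] using hP t (hsub ht))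
    (fun t ht => by simpa only [mul_assoc] using hQ t (hsub ht))
    (intervalIntegrable_jacobi_weight_mul hα hξ_gt hξ_lt.le (P.continuous.mul Q.continuous))
  have hp_one : (1 - 1 : ℝ) ^ (α + 1) = 0 := by
    rw [sub_self, Real.zero_rpow (by linarith)]
  have hkr : (k : ℝ) - r ≠ 0 := sub_ne_zero.2 (Nat.cast_injective.ne hrk.symm)
  have hkrlam : (k : ℝ) + r + lam ≠ 0 := by
    have : (1 : ℝ) ≤ k + r := by exact_mod_cast Nat.one_le_iff_ne_zero.2 (by omega)
    linarith
  have hcoeff : (r : ℝ) * (r + lam) - k * (k + lam) = -((k - r) * (k + r + lam)) := by ring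
  rw [hcoeff, hp_one, hPξ] at hgreen
  rw [eq_div_iff (mul_ne_zero hkr hkrlam)]
  simp only [mul_assoc] at hgreen ⊢
  linear_combination -hgreen
end

section
/- Let α, β > -1, set λ = α + β + 1, and let r ≥ 0 and k ≥ 1 be integers with k ≠ r. Suppose P and Q are real polynomials satisfying, for all t ∈ (-1,1), d/dt[(1-t)^{α+1}(1+t)^{β+1} P'(t)] + r(r+λ)(1-t)^α(1+t)^β P(t) = 0 and d/dt[(1-t)^{α+1}(1+t)^{β+1} Q'(t)] + k(k+λ)(1-t)^α(1+t)^β Q(t) = 0. Let ξ ∈ (-1,1) with P'(ξ) = 0. Then ∫_ξ^1 (P(t) - P(ξ)) Q(t) (1-t)^α (1+t)^β dt = (r(r+λ) P(ξ) / ((k-r)(k+r+λ))) · ∫_ξ^1 Q(t) (1-t)^α (1+t)^β dt. -/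
/-!
Write `W(t) = (1-t)^(α+1) (1+t)^(β+1)` and `w(t) = (1-t)^α (1+t)^β`, and let `μ = r(r+λ)`,
`ν = k(k+λ)`. Since `W` vanishes at `1`, integrating the equation for `Q` over `[ξ,1]` gives
`ν ∫ Q w = W(ξ) Q'(ξ)`, and integrating the Lagrange identity
`(W (P'Q - Q'P))' = (ν - μ) P Q w` gives `(ν - μ) ∫ P Q w = P(ξ) W(ξ) Q'(ξ)`, because `P'(ξ) = 0`.
Eliminating `W(ξ) Q'(ξ)` yields `(ν - μ) ∫ (P - P(ξ)) Q w = μ P(ξ) ∫ Q w`, and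
`ν - μ = (k - r)(k + r + λ)`.
-/

open MeasureTheory Polynomial Set Filter Topology

section JacobiWeight

variable {α β ξ : ℝ}

theorem intervalIntegrable_mul_rpow_mul_rpow (hα : -1 < α) (hξ : -1 < ξ) {g : ℝ → ℝ}
    (hg : Continuous g) :
    IntervalIntegrable (fun t => g t * (1 - t) ^ α * (1 + t) ^ β) volume ξ 1 := by
  have hleft : IntervalIntegrable (fun t : ℝ => (1 - t) ^ α) volume ξ 1 := by
    simpa using
      (intervalIntegral.intervalIntegrable_rpow' (a := 1 - ξ) (b := 1 - 1) hα).comp_sub_left 1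
  have hright : ContinuousOn (fun t : ℝ => g t * (1 + t) ^ β) (uIcc ξ 1) := by
    refine hg.continuousOn.mul fun t ht => ?_
    have ht' : -1 < t := (lt_min hξ (by norm_num)).trans_le ht.1
    exact ((continuousAt_const.add continuousAt_id (x := t)).rpow_const (p := β)
      (Or.inl (by simp; linarith))).continuousWithinAt
  simpa only [mul_right_comm] using hleft.continuousOn_mul hright

theorem continuousAt_one_sub_rpow_mul_one_add_rpow (hα : -1 < α) {s : ℝ} (hs : -1 < s) :
    ContinuousAt (fun s : ℝ => (1 - s) ^ (α + 1) * (1 + s) ^ (β + 1)) s :=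
  ((continuousAt_const.sub continuousAt_id).rpow_const (Or.inr (by linarith))).mul
    ((continuousAt_const.add continuousAt_id).rpow_const (Or.inl (by simp; linarith)))

theorem const_mul_integral_mul_rpow_mul_rpow_eq (hα : -1 < α) (hξ : ξ ∈ Ioo (-1) 1)
    {F g : ℝ → ℝ} (c : ℝ) (hF : Continuous F) (hg : Continuous g)
    (hderiv : ∀ t ∈ Ioo ξ 1, HasDerivAt (fun s => (1 - s) ^ (α + 1) * (1 + s) ^ (β + 1) * F s)
      (c * (g t * (1 - t) ^ α * (1 + t) ^ β)) t) :
    c * ∫ t in ξ..1, g t * (1 - t) ^ α * (1 + t) ^ β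
      = -((1 - ξ) ^ (α + 1) * (1 + ξ) ^ (β + 1) * F ξ) := by
  have hcont : ∀ s, -1 < s →
      ContinuousAt (fun s => (1 - s) ^ (α + 1) * (1 + s) ^ (β + 1) * F s) s := fun s hs =>
    (continuousAt_one_sub_rpow_mul_one_add_rpow hα hs).mul hF.continuousAt
  have htendsto_one : Tendsto (fun s => (1 - s) ^ (α + 1) * (1 + s) ^ (β + 1) * F s)
      (𝓝[<] 1) (𝓝 0) := by
    have h := (hcont 1 (by norm_num)).tendsto
    rw [sub_self, Real.zero_rpow (by linarith), zero_mul, zero_mul] at h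
    exact h.mono_left nhdsWithin_le_nhds
  rw [← intervalIntegral.integral_const_mul,
    intervalIntegral.integral_eq_sub_of_hasDerivAt_of_tendsto hξ.2 hderiv
      ((intervalIntegrable_mul_rpow_mul_rpow hα hξ.1 hg).const_mul c)
      ((hcont ξ hξ.1).tendsto.mono_left nhdsWithin_le_nhds) htendsto_one, zero_sub]

end JacobiWeight

theorem hasDerivAt_mul_wronskian {W w p q p' q' : ℝ → ℝ} {μ ν t : ℝ}
    (hp : HasDerivAt p (p' t) t) (hq : HasDerivAt q (q' t) t)
    (hWp : HasDerivAt (fun s => W s * p' s) (-μ * w t * p t) t)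
    (hWq : HasDerivAt (fun s => W s * q' s) (-ν * w t * q t) t) :
    HasDerivAt (fun s => W s * (p' s * q s - q' s * p s)) ((ν - μ) * (p t * q t * w t)) t := by
  refine (((hWp.mul hq).sub (hWq.mul hp)).congr_deriv (by ring)).congr_of_eventuallyEq
    (Eventually.of_forall fun s => ?_)
  simp only [Pi.mul_apply, Pi.sub_apply]
  ring

theorem jacobi_truncated_test_function_coefficient_general
    (α β : ℝ) (hα : -1 < α) (hβ : -1 < β) (lam : ℝ) (hlam : lam = α + β + 1)
    (r k : ℕ) (hrk : k ≠ r)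
    (P Q : Polynomial ℝ)
    (hP : ∀ t ∈ Set.Ioo (-1:ℝ) 1, HasDerivAt
      (fun s : ℝ => (1 - s) ^ (α + 1) * (1 + s) ^ (β + 1) * (derivative P).eval s)
      (-((r:ℝ) * ((r:ℝ) + lam)) * (1 - t) ^ α * (1 + t) ^ β * P.eval t) t)
    (hQ : ∀ t ∈ Set.Ioo (-1:ℝ) 1, HasDerivAt
      (fun s : ℝ => (1 - s) ^ (α + 1) * (1 + s) ^ (β + 1) * (derivative Q).eval s)
      (-((k:ℝ) * ((k:ℝ) + lam)) * (1 - t) ^ α * (1 + t) ^ β * Q.eval t) t)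
    (ξ : ℝ) (hξ : ξ ∈ Set.Ioo (-1:ℝ) 1) (hPξ : (derivative P).eval ξ = 0) :
    ∫ t in ξ..1, (P.eval t - P.eval ξ) * Q.eval t * (1 - t) ^ α * (1 + t) ^ β
      = ((r:ℝ) * ((r:ℝ) + lam) * P.eval ξ / (((k:ℝ) - (r:ℝ)) * ((k:ℝ) + (r:ℝ) + lam))) *
        ∫ t in ξ..1, Q.eval t * (1 - t) ^ α * (1 + t) ^ β := by
  have hinner : ∀ t ∈ Ioo ξ 1, t ∈ Ioo (-1 : ℝ) 1 := fun t ht => ⟨hξ.1.trans ht.1, ht.2⟩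
  have hQint := const_mul_integral_mul_rpow_mul_rpow_eq hα hξ (-((k : ℝ) * (k + lam)))
    (F := fun s => (derivative Q).eval s) (g := fun s => Q.eval s) (derivative Q).continuous
    Q.continuous fun t ht => (hQ t (hinner t ht)).congr_deriv (by ring)
  have hPQint := const_mul_integral_mul_rpow_mul_rpow_eq hα hξ
    ((k : ℝ) * (k + lam) - r * (r + lam))
    (F := fun s => (derivative P).eval s * Q.eval s - (derivative Q).eval s * P.eval s)
    (g := fun s => P.eval s * Q.eval s)
    (((derivative P).continuous.mul Q.continuous).sub ((derivative Q).continuous.mul P.continuous))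
    (P.continuous.mul Q.continuous) fun t ht =>
      (hasDerivAt_mul_wronskian (w := fun t => (1 - t) ^ α * (1 + t) ^ β)
        (μ := r * (r + lam)) (ν := k * (k + lam)) (P.hasDerivAt t) (Q.hasDerivAt t)
        ((hP t (hinner t ht)).congr_deriv (by ring))
        ((hQ t (hinner t ht)).congr_deriv (by ring))).congr_deriv (by ring)
  have hsplit : ∫ t in ξ..1, (P.eval t - P.eval ξ) * Q.eval t * (1 - t) ^ α * (1 + t) ^ β
      = (∫ t in ξ..1, P.eval t * Q.eval t * (1 - t) ^ α * (1 + t) ^ β)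
        - P.eval ξ * ∫ t in ξ..1, Q.eval t * (1 - t) ^ α * (1 + t) ^ β := by
    rw [← intervalIntegral.integral_const_mul, ← intervalIntegral.integral_sub
      (intervalIntegrable_mul_rpow_mul_rpow (g := fun t => P.eval t * Q.eval t) hα hξ.1
        (P.continuous.mul Q.continuous))
      ((intervalIntegrable_mul_rpow_mul_rpow hα hξ.1 Q.continuous).const_mul _)]
    congr 1 with t
    ring
  have hk_add_r : (1 : ℝ) ≤ k + r := by norm_cast; omega
  have hne : ((k : ℝ) - r) * (k + r + lam) ≠ 0 :=
    mul_ne_zero (sub_ne_zero.mpr (by exact_mod_cast hrk)) (by linarith)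
  rw [hPξ] at hPQint
  rw [hsplit, div_mul_eq_mul_div, eq_div_iff hne]
  linear_combination hPQint + P.eval ξ * hQint

/-- **Jacobi–Fourier coefficient of Yudin's truncated test function.**
If `P`, `Q` solve the Jacobi equations with parameters `r(r+λ)` and `k(k+λ)` (`k ≥ 1`,
`k ≠ r`), and `P'(ξ) = 0` for `ξ ∈ (-1,1)`, then
`∫_ξ^1 (P(t)-P(ξ)) Q(t)(1-t)^α(1+t)^β dt
  = (r(r+λ)P(ξ)/((k-r)(k+r+λ))) ∫_ξ^1 Q(t)(1-t)^α(1+t)^β dt`. -/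
theorem jacobi_truncated_test_function_coefficient
    (α β : ℝ) (hα : -1 < α) (hβ : -1 < β) (lam : ℝ) (hlam : lam = α + β + 1)
    (r k : ℕ) (hk : 1 ≤ k) (hrk : k ≠ r)
    (P Q : Polynomial ℝ)
    (hP : ∀ t ∈ Set.Ioo (-1:ℝ) 1, HasDerivAt
      (fun s : ℝ => (1 - s) ^ (α + 1) * (1 + s) ^ (β + 1) * (derivative P).eval s)
      (-((r:ℝ) * ((r:ℝ) + lam)) * (1 - t) ^ α * (1 + t) ^ β * P.eval t) t)
    (hQ : ∀ t ∈ Set.Ioo (-1:ℝ) 1, HasDerivAt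
      (fun s : ℝ => (1 - s) ^ (α + 1) * (1 + s) ^ (β + 1) * (derivative Q).eval s)
      (-((k:ℝ) * ((k:ℝ) + lam)) * (1 - t) ^ α * (1 + t) ^ β * Q.eval t) t)
    (ξ : ℝ) (hξ : ξ ∈ Set.Ioo (-1:ℝ) 1) (hPξ : (derivative P).eval ξ = 0) :
    ∫ t in ξ..1, (P.eval t - P.eval ξ) * Q.eval t * (1 - t) ^ α * (1 + t) ^ β
      = ((r:ℝ) * ((r:ℝ) + lam) * P.eval ξ / (((k:ℝ) - (r:ℝ)) * ((k:ℝ) + (r:ℝ) + lam))) *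
        ∫ t in ξ..1, Q.eval t * (1 - t) ^ α * (1 + t) ^ β :=
  jacobi_truncated_test_function_coefficient_general α β hα hβ lam hlam r k hrk P Q hP hQ ξ hξ hPξ
end

section
/- Let P be a real polynomial of degree r ≥ 2 all of whose roots are real, simple, and contained in the open interval (-1,1), and suppose P(1) > 0. Let ξ be the largest real root of the derivative P'. Then ξ ∈ (-1,1), P(ξ) < 0, P is strictly increasing on [ξ, 1], and consequently P(t) - P(ξ) ≥ 0 for every t ∈ [ξ, 1], with P(t) - P(ξ) > 0 for t ∈ (ξ,1]. -/
open Polynomial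

private lemma mprod_nonneg (s : Multiset ℝ) (h : ∀ a ∈ s, 0 ≤ a) : 0 ≤ s.prod := by
  induction s using Multiset.induction_on with
  | empty => simp
  | cons a s ih =>
    rw [Multiset.prod_cons]
    exact mul_nonneg (h a (Multiset.mem_cons_self a s))
      (ih fun b hb => h b (Multiset.mem_cons_of_mem hb))

private lemma mprod_pos (s : Multiset ℝ) (h : ∀ a ∈ s, 0 < a) : 0 < s.prod := by
  induction s using Multiset.induction_on with
  | empty => simp
  | cons a s ih =>
    rw [Multiset.prod_cons]
    exact mul_pos (h a (Multiset.mem_cons_self a s))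
      (ih fun b hb => h b (Multiset.mem_cons_of_mem hb))

/-- **Behaviour of a totally real polynomial after its last critical point.**
If all roots of `P` (of degree `r ≥ 2`) are real, simple and lie in `(-1,1)`, `P(1) > 0`,
and `ξ` is the largest root of `P'`, then `ξ ∈ (-1,1)`, `P(ξ) < 0`, `P` is strictly
increasing on `[ξ,1]`, hence `P(t) - P(ξ) ≥ 0` on `[ξ,1]` and `> 0` on `(ξ,1]`. -/
theorem totally_real_poly_after_last_critical_point
    (r : ℕ) (hr : 2 ≤ r) (P : Polynomial ℝ) (hdeg : P.natDegree = r)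
    (hreal : P.roots.card = r) (hsimple : P.roots.Nodup)
    (hloc : ∀ z ∈ P.roots, z ∈ Set.Ioo (-1:ℝ) 1)
    (hP1 : 0 < P.eval 1)
    (ξ : ℝ) (hξ : (derivative P).eval ξ = 0)
    (hξmax : ∀ s : ℝ, (derivative P).eval s = 0 → s ≤ ξ) :
    ξ ∈ Set.Ioo (-1:ℝ) 1 ∧ P.eval ξ < 0 ∧
    StrictMonoOn (fun t => P.eval t) (Set.Icc ξ 1) ∧
    (∀ t ∈ Set.Icc ξ 1, 0 ≤ P.eval t - P.eval ξ) ∧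
    (∀ t ∈ Set.Ioc ξ 1, 0 < P.eval t - P.eval ξ) := by
  classical
  set c := P.leadingCoeff with hc
  have hfac : C c * (P.roots.map fun a => X - C a).prod = P :=
    C_leadingCoeff_mul_prod_multiset_X_sub_C (by rw [hreal, hdeg])
  -- leading coefficient is positive
  have hcpos : 0 < c := by
    have h1 : P.eval 1 = c * ((P.roots.map fun a => (1:ℝ) - a).prod) := by
      conv_lhs => rw [← hfac]
      rw [eval_mul, eval_C, eval_multiset_prod, Multiset.map_map]
      simp
    have hprod : 0 < (P.roots.map fun a => (1:ℝ) - a).prod := by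
      refine mprod_pos _ fun a ha => ?_
      obtain ⟨b, hb, rfl⟩ := Multiset.mem_map.1 ha
      have := (hloc b hb).2
      linarith
    nlinarith [hP1, h1]
  -- the largest root α
  have hFne : P.roots.toFinset.Nonempty := by
    rw [← Finset.card_pos, Multiset.toFinset_card_of_nodup hsimple, hreal]; omega
  obtain ⟨α, hαF, hαmax'⟩ := P.roots.toFinset.exists_max_image id hFne
  have hαmem : α ∈ P.roots := Multiset.mem_toFinset.1 hαF
  have hαmax : ∀ j ∈ P.roots, j ≤ α := fun j hj => hαmax' j (Multiset.mem_toFinset.2 hj)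
  have hα1 : α < 1 := (hloc α hαmem).2
  -- derivative formula
  have hd : derivative P =
      C c * (P.roots.map
        (fun i => ((P.roots.erase i).map fun a => X - C a).prod)).sum := by
    conv_lhs => rw [← hfac]
    rw [derivative_mul, derivative_C, zero_mul, zero_add, derivative_prod]
    congr 1
    refine congr_arg _ (Multiset.map_congr rfl fun j hj => ?_)
    rw [derivative_sub, derivative_X, derivative_C, sub_zero, mul_one]
  have hdeval : ∀ t : ℝ, (derivative P).eval t =
      c * (P.roots.map
        (fun i => ((P.roots.erase i).map fun a => t - a).prod)).sum := by
    intro t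
    rw [hd, eval_mul, eval_C]
    congr 1
    have hms := map_multiset_sum (evalRingHom t)
      (Multiset.map (fun i => ((P.roots.erase i).map fun a => X - C a).prod) P.roots)
    simp only [coe_evalRingHom] at hms
    rw [hms, Multiset.map_map]
    refine congr_arg _ (Multiset.map_congr rfl fun j hj => ?_)
    simp only [Function.comp_apply, coe_evalRingHom, eval_multiset_prod, Multiset.map_map]
    refine congr_arg _ (Multiset.map_congr rfl fun a ha => ?_)
    simp
  -- derivative is positive at every t ≥ α
  have key : ∀ t : ℝ, α ≤ t → 0 < (derivative P).eval t := by
    intro t ht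
    rw [hdeval t]
    refine mul_pos hcpos ?_
    have hco : P.roots = α ::ₘ P.roots.erase α := (Multiset.cons_erase hαmem).symm
    have hsum : ∀ (g : ℝ → ℝ), (P.roots.map g).sum = g α + ((P.roots.erase α).map g).sum := by
      intro g
      conv_lhs => rw [hco, Multiset.map_cons, Multiset.sum_cons]
    rw [hsum]
    have h1 : 0 < ((P.roots.erase α).map fun a => t - a).prod := by
      refine mprod_pos _ fun x hx => ?_
      obtain ⟨b, hb, rfl⟩ := Multiset.mem_map.1 hx
      have hbne : b ≠ α := (hsimple.mem_erase_iff.1 hb).1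
      have hbmem : b ∈ P.roots := Multiset.mem_of_mem_erase hb
      have : b < α := lt_of_le_of_ne (hαmax b hbmem) hbne
      linarith
    have h2 : 0 ≤ ((P.roots.erase α).map
        (fun i => ((P.roots.erase i).map fun a => t - a).prod)).sum := by
      refine Multiset.sum_nonneg fun x hx => ?_
      obtain ⟨i, hi, rfl⟩ := Multiset.mem_map.1 hx
      refine mprod_nonneg _ fun y hy => ?_
      obtain ⟨b, hb, rfl⟩ := Multiset.mem_map.1 hy
      have hbmem : b ∈ P.roots := Multiset.mem_of_mem_erase hb
      have := hαmax b hbmem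
      linarith
    linarith
  -- ξ < α
  have hξα : ξ < α := by
    by_contra h
    push_neg at h
    exact (key ξ h).ne' hξ
  have hξ1 : ξ < 1 := hξα.trans hα1
  -- a second root b < α, by Rolle ξ > b > -1
  have hξm1 : -1 < ξ := by
    have hecard : (P.roots.erase α).card = r - 1 := by
      rw [Multiset.card_erase_of_mem hαmem, hreal]
      rfl
    have hene : P.roots.erase α ≠ 0 := by
      intro h0
      rw [h0] at hecard
      simp at hecard
      omega
    obtain ⟨b, hb⟩ := Multiset.exists_mem_of_ne_zero hene
    have hbne : b ≠ α := (hsimple.mem_erase_iff.1 hb).1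
    have hbmem : b ∈ P.roots := Multiset.mem_of_mem_erase hb
    have hbα : b < α := lt_of_le_of_ne (hαmax b hbmem) hbne
    have hPb : P.eval b = 0 := isRoot_of_mem_roots hbmem
    have hPα : P.eval α = 0 := isRoot_of_mem_roots hαmem
    obtain ⟨cp, hcp, hcp0⟩ := exists_deriv_eq_zero hbα
      (P.continuous.continuousOn) (by simp [hPb, hPα])
    rw [Polynomial.deriv] at hcp0
    have : cp ≤ ξ := hξmax cp hcp0
    have hbm1 : -1 < b := (hloc b hbmem).1
    have := hcp.1
    linarith
  -- derivative positive on (ξ, ∞)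
  have hpos : ∀ t : ℝ, ξ < t → 0 < (derivative P).eval t := by
    intro t ht
    rcases le_or_gt α t with h | h
    · exact key t h
    · by_contra hle
      push_neg at hle
      have hne : (derivative P).eval t ≠ 0 := fun h0 => absurd (hξmax t h0) (not_le.2 ht)
      have hlt : (derivative P).eval t < 0 := lt_of_le_of_ne hle hne
      have hcont : ContinuousOn (fun x => (derivative P).eval x) (Set.Icc t α) :=
        ((derivative P).continuous.continuousOn)
      have h0mem : (0:ℝ) ∈ Set.Ioo ((derivative P).eval t) ((derivative P).eval α) :=
        ⟨hlt, key α le_rfl⟩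
      obtain ⟨s, hs, hs0⟩ := intermediate_value_Ioo h.le hcont h0mem
      have : s ≤ ξ := hξmax s hs0
      have := hs.1
      linarith
  -- strict monotonicity on [ξ, 1]
  have hsm : StrictMonoOn (fun t => P.eval t) (Set.Icc ξ 1) := by
    refine strictMonoOn_of_deriv_pos (convex_Icc ξ 1)
      (P.continuous.continuousOn) fun x hx => ?_
    rw [interior_Icc] at hx
    rw [Polynomial.deriv]
    exact hpos x hx.1
  have hPα : P.eval α = 0 := isRoot_of_mem_roots hαmem
  have hPξ : P.eval ξ < 0 := by
    have := hsm ⟨le_refl ξ, hξ1.le⟩ ⟨hξα.le, hα1.le⟩ hξα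
    simpa [hPα] using this
  refine ⟨⟨hξm1, hξ1⟩, hPξ, hsm, ?_, ?_⟩
  · intro t ht
    rcases eq_or_lt_of_le ht.1 with h | h
    · simp [← h]
    · have := hsm ⟨le_refl ξ, hξ1.le⟩ ht h
      simp only [sub_nonneg]
      exact this.le
  · intro t ht
    have := hsm ⟨le_refl ξ, hξ1.le⟩ ⟨ht.1.le, ht.2⟩ ht.1
    simpa [sub_pos] using this
end

section
/- For every real number ν ≥ 1 such that 2ν is an integer, (ν+1)^ν · (ν+3)^ν ≤ Γ(ν+1)² · 8^ν, where Γ is the Gamma function. -/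
/-!
Since `Γ(ν + 2)² 8^(ν + 1) = 8 (ν + 1)² · Γ(ν + 1)² 8^ν`, the inequality propagates from `ν` to
`ν + 1` as soon as `((ν + 2)(ν + 4))^(ν + 1) ≤ 8 (ν + 1)² ((ν + 1)(ν + 3))^ν`. After taking
logarithms this is a bound on three logarithms of ratios, and the estimate
`log t ≤ sinh (log t) = (t - t⁻¹) / 2` for `t ≥ 1` turns it into a rational inequality in `ν`
that holds for `ν ≥ 1`. It remains to check the two base cases `ν = 1` (an equality) and
`ν = 3 / 2` (where `Γ(5/2) = 3√π/4` and `π > 3` suffice).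
-/

open Real

theorem log_le_sub_inv_div_two {t : ℝ} (ht : 1 ≤ t) : log t ≤ (t - t⁻¹) / 2 := by
  rw [← sinh_log (by linarith)]
  exact self_le_sinh_iff.2 (log_nonneg ht)

theorem log_div_le_of_le {a b : ℝ} (ha : 0 < a) (hab : a ≤ b) :
    log (b / a) ≤ (b / a - a / b) / 2 := by
  simpa only [inv_div] using log_le_sub_inv_div_two ((one_le_div ha).2 hab)

theorem add_two_rpow_mul_add_four_rpow_le {ν : ℝ} (hν : 1 ≤ ν) :
    (ν + 2) ^ (ν + 1) * (ν + 4) ^ (ν + 1) ≤ 8 * (ν + 1) ^ 2 * ((ν + 1) ^ ν * (ν + 3) ^ ν) := by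
  have p1 : 0 < ν + 1 := by linarith
  have p2 : 0 < ν + 2 := by linarith
  have p3 : 0 < ν + 3 := by linarith
  have p4 : 0 < ν + 4 := by linarith
  have h12 := mul_le_mul_of_nonneg_left (log_div_le_of_le p1 (by linarith : ν + 1 ≤ ν + 2)) p1.le
  have h34 := mul_le_mul_of_nonneg_left (log_div_le_of_le p3 (by linarith : ν + 3 ≤ ν + 4)) p1.le
  have h13 := log_div_le_of_le p1 (by linarith : ν + 1 ≤ ν + 3)
  rw [log_div p2.ne' p1.ne'] at h12
  rw [log_div p4.ne' p3.ne'] at h34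
  rw [log_div p3.ne' p1.ne'] at h13
  -- At `ν = 1` the left side equals `61 / 30`, just below `log 8 ≈ 2.079`.
  have hrat : (ν + 1) * ((ν + 2) / (ν + 1) - (ν + 1) / (ν + 2)) / 2
      + (ν + 1) * ((ν + 4) / (ν + 3) - (ν + 3) / (ν + 4)) / 2
      + ((ν + 3) / (ν + 1) - (ν + 1) / (ν + 3)) / 2 ≤ 2.04 := by
    rw [div_add_div _ _ (by positivity) (by positivity),
      div_add_div _ _ (by positivity) (by positivity)]
    field_simp
    nlinarith [mul_nonneg (sub_nonneg.2 hν) (sub_nonneg.2 hν)]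
  have hlog8 : (2.04 : ℝ) ≤ log 8 := by
    rw [show (8 : ℝ) = 2 ^ 3 by norm_num, log_pow]
    linarith [log_two_gt_d9]
  rw [← log_le_log_iff (by positivity) (by positivity), log_mul (by positivity) (by positivity),
    log_mul (by positivity) (by positivity), log_mul (by positivity) (by positivity),
    log_mul (by positivity) (by positivity), log_pow, log_rpow p2, log_rpow p4, log_rpow p1,
    log_rpow p3]
  push_cast
  linarith

def GammaIneq (ν : ℝ) : Prop :=
  (ν + 1) ^ ν * (ν + 3) ^ ν ≤ Gamma (ν + 1) ^ 2 * 8 ^ ν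

theorem GammaIneq.add_one {ν : ℝ} (hν : 1 ≤ ν) (h : GammaIneq ν) : GammaIneq (ν + 1) := by
  unfold GammaIneq at h ⊢
  rw [Gamma_add_one (by linarith), rpow_add_one (by norm_num : (8 : ℝ) ≠ 0)]
  calc (ν + 1 + 1) ^ (ν + 1) * (ν + 1 + 3) ^ (ν + 1)
      = (ν + 2) ^ (ν + 1) * (ν + 4) ^ (ν + 1) := by ring_nf
    _ ≤ 8 * (ν + 1) ^ 2 * ((ν + 1) ^ ν * (ν + 3) ^ ν) := add_two_rpow_mul_add_four_rpow_le hν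
    _ ≤ 8 * (ν + 1) ^ 2 * (Gamma (ν + 1) ^ 2 * 8 ^ ν) := by gcongr
    _ = ((ν + 1) * Gamma (ν + 1)) ^ 2 * (8 ^ ν * 8) := by ring

theorem GammaIneq.add_nat {ν : ℝ} (hν : 1 ≤ ν) (h : GammaIneq ν) (k : ℕ) :
    GammaIneq (ν + k) := by
  induction k with
  | zero => simpa using h
  | succ k ih =>
    rw [Nat.cast_succ, ← add_assoc]
    exact ih.add_one (by linarith [k.cast_nonneg (α := ℝ)])

theorem gammaIneq_one : GammaIneq 1 := by
  norm_num [GammaIneq, Gamma_two]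

theorem gammaIneq_three_halves : GammaIneq (3 / 2) := by
  have hΓ : Gamma (3 / 2 + 1) = 3 / 4 * √π := by
    rw [Gamma_add_one (by norm_num), show (3 / 2 : ℝ) = 1 / 2 + 1 by norm_num,
      Gamma_add_one (by norm_num), Gamma_one_half_eq]
    ring
  have hsqrt : ∀ x : ℝ, 0 ≤ x → x ^ (3 / 2 : ℝ) = √(x ^ 3) := fun x hx => by
    rw [sqrt_eq_rpow, ← rpow_natCast, ← rpow_mul hx]
    norm_num
  rw [GammaIneq, hΓ, ← mul_rpow (by norm_num) (by norm_num), hsqrt _ (by norm_num),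
    hsqrt _ (by norm_num), mul_pow _ √π, sq_sqrt pi_pos.le,
    ← sqrt_sq (by positivity : (0 : ℝ) ≤ (3 / 4) ^ 2 * π), ← sqrt_mul (by positivity)]
  gcongr
  nlinarith [pi_gt_three]

theorem exists_nat_eq_one_add_or_three_halves_add {ν : ℝ} (hν : 1 ≤ ν) {k : ℤ}
    (hk : (k : ℝ) = 2 * ν) : ∃ j : ℕ, ν = 1 + j ∨ ν = 3 / 2 + j := by
  have hk2 : 2 ≤ k := by exact_mod_cast (show (2 : ℝ) ≤ k by linarith)
  obtain ⟨n, hn⟩ := Int.eq_ofNat_of_zero_le (sub_nonneg.2 hk2)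
  obtain ⟨j, rfl | rfl⟩ := Nat.even_or_odd' n
  · refine ⟨j, Or.inl ?_⟩
    have : (k : ℝ) = 2 * j + 2 := by exact_mod_cast (by omega : k = 2 * j + 2)
    linarith
  · refine ⟨j, Or.inr ?_⟩
    have : (k : ℝ) = 2 * j + 3 := by exact_mod_cast (by omega : k = 2 * j + 3)
    linarith

/-- **Key Gamma-function inequality.** For every half-integer or integer `ν ≥ 1`,
`(ν+1)^ν (ν+3)^ν ≤ Γ(ν+1)² · 8^ν`. -/
theorem gamma_inequality_half_integers
    (ν : ℝ) (hν : 1 ≤ ν) (hhalf : ∃ k : ℤ, (k : ℝ) = 2 * ν) :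
    (ν + 1) ^ ν * (ν + 3) ^ ν ≤ Real.Gamma (ν + 1) ^ 2 * 8 ^ ν := by
  obtain ⟨k, hk⟩ := hhalf
  obtain ⟨j, rfl | rfl⟩ := exists_nat_eq_one_add_or_three_halves_add hν hk
  · exact gammaIneq_one.add_nat le_rfl j
  · exact gammaIneq_three_halves.add_nat (by norm_num) j
end
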